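/- Let (A,V,χ,F,ν) be a crossed product system with preunit and assume F is a cocycle satisfying the twisted module condition. Then the corestriction p_χ of ∇_χ to A×V and the inclusion ι_χ : A×V → A⊗V are multiplicative: p_χ(μ_𝓔(x⊗y)) = μ_E(p_χ(x)⊗p_χ(y)) for all x,y ∈ A⊗V, and μ_𝓔(ι_χ(x)⊗ι_χ(y)) = ι_χ(μ_E(x⊗y)) for all x,y ∈ A×V, where μ_E denotes the restriction and corestriction of μ_𝓔 to A×V. -/
import Mathlib


open TensorProduct

noncomputable section

namespace WeakCrossedProduct

variable {k : Type*} [Field k]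
variable {A : Type*} [Ring A] [Algebra k A]
variable {V : Type*} [AddCommGroup V] [Module k V]

/-- The map `A ⊗ₖ (A ⊗ₖ V) → A ⊗ₖ V`, `a ⊗ x ↦ a • x`, i.e. `μ_A ⊗ id_V`. -/
def actMap : A ⊗[k] (A ⊗[k] V) →ₗ[k] A ⊗[k] V :=
  TensorProduct.lift (LinearMap.mk₂ k (fun (a : A) (x : A ⊗[k] V) => a • x)
    (fun a b x => add_smul a b x)
    (fun c a x => smul_assoc c a x)
    (fun a x y => smul_add a x y)
    (fun c a x => smul_comm a c x))

/-- Given `g : V → A ⊗ V`, the map `A ⊗ V → A ⊗ V`, `a ⊗ u ↦ a • g u`. -/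
def smulMap (g : V →ₗ[k] A ⊗[k] V) : A ⊗[k] V →ₗ[k] A ⊗[k] V :=
  TensorProduct.lift (LinearMap.mk₂ k (fun (a : A) (u : V) => a • g u)
    (fun a b u => add_smul a b (g u))
    (fun c a u => smul_assoc c a (g u))
    (fun a u u' => show a • g (u + u') = a • g u + a • g u' by
      rw [map_add, smul_add])
    (fun c a u => show a • g (c • u) = c • (a • g u) by
      rw [map_smul]; exact smul_comm a c (g u)))

/-- The right action of `a' ∈ A` on `A ⊗ V`: `(a ⊗ v) · a' := a • χ (v ⊗ a')`. -/
def ract (χ : V ⊗[k] A →ₗ[k] A ⊗[k] V) (a' : A) : A ⊗[k] V →ₗ[k] A ⊗[k] V :=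
  smulMap (χ ∘ₗ (TensorProduct.mk k V A).flip a')

/-- `(A,V,χ)` is a twisted space:
`χ ∘ (id_V ⊗ μ_A) = (μ_A ⊗ id_V) ∘ (id_A ⊗ χ) ∘ (χ ⊗ id_A)` (stated on pure tensors). -/
def IsTwisting (χ : V ⊗[k] A →ₗ[k] A ⊗[k] V) : Prop :=
  ∀ (v : V) (a b : A), χ (v ⊗ₜ[k] (a * b)) = ract χ b (χ (v ⊗ₜ[k] a))

/-- `∇_χ(x) := x · 1_A`. -/
def nabla (χ : V ⊗[k] A →ₗ[k] A ⊗[k] V) : A ⊗[k] V →ₗ[k] A ⊗[k] V :=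
  ract χ 1

/-- `A × V := ∇_χ(A ⊗ V)`. -/
def AxV (χ : V ⊗[k] A →ₗ[k] A ⊗[k] V) : Submodule k (A ⊗[k] V) :=
  LinearMap.range (nabla χ)

/-- `X_χ := {x ∈ A ⊗ V : x · 1_A = 0}`. -/
def Xchi (χ : V ⊗[k] A →ₗ[k] A ⊗[k] V) : Submodule k (A ⊗[k] V) :=
  LinearMap.ker (nabla χ)

/-- `μ_𝓔 := (μ_A ⊗ id_V) ∘ (μ_A ⊗ F) ∘ (id_A ⊗ χ ⊗ id_V)`. -/
def muE (χ : V ⊗[k] A →ₗ[k] A ⊗[k] V) (F : V ⊗[k] V →ₗ[k] A ⊗[k] V) :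
    (A ⊗[k] V) ⊗[k] (A ⊗[k] V) →ₗ[k] A ⊗[k] V :=
  actMap ∘ₗ
  LinearMap.lTensor A (actMap) ∘ₗ
  LinearMap.lTensor A (LinearMap.lTensor A F ∘ₗ (TensorProduct.assoc k A V V).toLinearMap) ∘ₗ
  LinearMap.lTensor A (LinearMap.rTensor V χ) ∘ₗ
  LinearMap.lTensor A (TensorProduct.assoc k V A V).symm.toLinearMap ∘ₗ
  (TensorProduct.assoc k A V (A ⊗[k] V)).toLinearMap

/-- The twisted module condition (stated on pure tensors). -/
def TwistedModuleCond (χ : V ⊗[k] A →ₗ[k] A ⊗[k] V) (F : V ⊗[k] V →ₗ[k] A ⊗[k] V) : Prop :=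
  ∀ (v w : V) (a : A),
    ract χ a (F (v ⊗ₜ[k] w)) = muE χ F (((1 : A) ⊗ₜ[k] v) ⊗ₜ[k] χ (w ⊗ₜ[k] a))

/-- The cocycle condition (stated on pure tensors). -/
def CocycleCond (χ : V ⊗[k] A →ₗ[k] A ⊗[k] V) (F : V ⊗[k] V →ₗ[k] A ⊗[k] V) : Prop :=
  ∀ (v w u : V),
    smulMap (F ∘ₗ (TensorProduct.mk k V V).flip u) (F (v ⊗ₜ[k] w)) =
      muE χ F (((1 : A) ⊗ₜ[k] v) ⊗ₜ[k] F (w ⊗ₜ[k] u))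

/-- Preunit condition (i). -/
def Preunit1 (χ : V ⊗[k] A →ₗ[k] A ⊗[k] V) (F : V ⊗[k] V →ₗ[k] A ⊗[k] V)
    (ν : A ⊗[k] V) : Prop :=
  ∀ v : V, muE χ F (((1 : A) ⊗ₜ[k] v) ⊗ₜ[k] ν) = nabla χ ((1 : A) ⊗ₜ[k] v)

/-- Preunit condition (ii). -/
def Preunit2 (χ : V ⊗[k] A →ₗ[k] A ⊗[k] V) (F : V ⊗[k] V →ₗ[k] A ⊗[k] V)
    (ν : A ⊗[k] V) : Prop :=
  ∀ v : V, smulMap (F ∘ₗ (TensorProduct.mk k V V).flip v) ν = nabla χ ((1 : A) ⊗ₜ[k] v)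

/-- Preunit condition (iii). -/
def Preunit3 (χ : V ⊗[k] A →ₗ[k] A ⊗[k] V) (ν : A ⊗[k] V) : Prop :=
  ∀ a : A, ract χ a ν = a • ν

/-- `γ(v) := ∇_χ(1_A ⊗ v)`. -/
def gammaMap (χ : V ⊗[k] A →ₗ[k] A ⊗[k] V) : V → A ⊗[k] V :=
  fun v => nabla χ ((1 : A) ⊗ₜ[k] v)

/-- `j'_ν(a) := a · ν(1)`. -/
def jnu' (ν : A ⊗[k] V) : A → A ⊗[k] V := fun a => a • ν

/-- `j_ν(a) := ∇_χ(j'_ν(a))`. -/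
def jnu (χ : V ⊗[k] A →ₗ[k] A ⊗[k] V) (ν : A ⊗[k] V) : A → A ⊗[k] V :=
  fun a => nabla χ (a • ν)


section Aux

variable (χ : V ⊗[k] A →ₗ[k] A ⊗[k] V) (F : V ⊗[k] V →ₗ[k] A ⊗[k] V)

lemma smulMap_tmul (g : V →ₗ[k] A ⊗[k] V) (a : A) (u : V) :
    smulMap g (a ⊗ₜ[k] u) = a • g u := by
  simp [smulMap]

lemma actMap_tmul (a : A) (x : A ⊗[k] V) : actMap (a ⊗ₜ[k] x) = a • x := by
  simp [actMap]

lemma smulMap_smul (g : V →ₗ[k] A ⊗[k] V) (a : A) (x : A ⊗[k] V) :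
    smulMap g (a • x) = a • smulMap g x := by
  induction x using TensorProduct.induction_on with
  | zero => simp
  | tmul b u => rw [smul_tmul', smulMap_tmul, smulMap_tmul, smul_eq_mul, mul_smul]
  | add x y hx hy => rw [smul_add, map_add, hx, hy, map_add, smul_add]

lemma ract_tmul (b a : A) (v : V) : ract χ b (a ⊗ₜ[k] v) = a • χ (v ⊗ₜ[k] b) := by
  simp [ract, smulMap_tmul]

lemma ract_smul (b a : A) (x : A ⊗[k] V) : ract χ b (a • x) = a • ract χ b x :=
  smulMap_smul _ a x

lemma nabla_tmul (a : A) (v : V) : nabla χ (a ⊗ₜ[k] v) = a • χ (v ⊗ₜ[k] (1 : A)) :=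
  ract_tmul χ 1 a v

lemma nabla_smul (a : A) (x : A ⊗[k] V) : nabla χ (a • x) = a • nabla χ x :=
  smulMap_smul _ a x

lemma nabla_chi (hχ : IsTwisting χ) (v : V) (a : A) :
    nabla χ (χ (v ⊗ₜ[k] a)) = χ (v ⊗ₜ[k] a) := by
  have := hχ v a 1
  rw [mul_one] at this
  exact this.symm

lemma nabla_idem (hχ : IsTwisting χ) (x : A ⊗[k] V) :
    nabla χ (nabla χ x) = nabla χ x := by
  induction x using TensorProduct.induction_on with
  | zero => simp
  | tmul a v => rw [nabla_tmul, nabla_smul, nabla_chi χ hχ]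
  | add x y hx hy => rw [map_add, map_add, hx, hy]

lemma nabla_F (hχ : IsTwisting χ) (hF : ∀ x : V ⊗[k] V, F x ∈ AxV χ)
    (z : V ⊗[k] V) : nabla χ (F z) = F z := by
  obtain ⟨u, hu⟩ := hF z
  rw [← hu, nabla_idem χ hχ]

lemma ract_mul (hχ : IsTwisting χ) (b c : A) (x : A ⊗[k] V) :
    ract χ (b * c) x = ract χ c (ract χ b x) := by
  induction x using TensorProduct.induction_on with
  | zero => simp
  | tmul a v => rw [ract_tmul, ract_tmul, ract_smul, hχ v b c]
  | add x y hx hy => rw [map_add, map_add, map_add, hx, hy]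

lemma ract_nabla (hχ : IsTwisting χ) (b : A) (x : A ⊗[k] V) :
    ract χ b (nabla χ x) = ract χ b x := by
  induction x using TensorProduct.induction_on with
  | zero => rw [map_zero, map_zero]
  | tmul a v => rw [nabla_tmul, ract_smul, ← hχ, one_mul, ract_tmul]
  | add x y hx hy => rw [map_add, map_add, map_add, hx, hy]

lemma aux_G (w : V) (z : A ⊗[k] V) :
    actMap ((LinearMap.lTensor A F) ((TensorProduct.assoc k A V V) (z ⊗ₜ[k] w))) =
      smulMap (F ∘ₗ (TensorProduct.mk k V V).flip w) z := by
  induction z using TensorProduct.induction_on with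
  | zero => simp
  | tmul c u => rw [assoc_tmul, LinearMap.lTensor_tmul, actMap_tmul, smulMap_tmul]; rfl
  | add x y hx hy =>
      rw [add_tmul, map_add, map_add, map_add, map_add, hx, hy]

lemma muE_tmul (a : A) (v : V) (b : A) (w : V) :
    muE χ F ((a ⊗ₜ[k] v) ⊗ₜ[k] (b ⊗ₜ[k] w)) =
      a • smulMap (F ∘ₗ (TensorProduct.mk k V V).flip w) (χ (v ⊗ₜ[k] b)) := by
  simp only [muE, LinearMap.coe_comp, Function.comp_apply, LinearEquiv.coe_coe,
    assoc_tmul, LinearMap.lTensor_tmul, assoc_symm_tmul, LinearMap.rTensor_tmul,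
    actMap_tmul]
  rw [aux_G]

lemma muE_right (b : A) (w : V) (x : A ⊗[k] V) :
    muE χ F (x ⊗ₜ[k] (b ⊗ₜ[k] w)) =
      smulMap (F ∘ₗ (TensorProduct.mk k V V).flip w) (ract χ b x) := by
  induction x using TensorProduct.induction_on with
  | zero => rw [zero_tmul, map_zero, map_zero, map_zero]
  | tmul a v => rw [muE_tmul, ract_tmul, smulMap_smul]
  | add x y hx hy => rw [add_tmul, map_add, map_add, map_add, hx, hy]

lemma muE_smul_left (a : A) (x y : A ⊗[k] V) :
    muE χ F ((a • x) ⊗ₜ[k] y) = a • muE χ F (x ⊗ₜ[k] y) := by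
  induction y using TensorProduct.induction_on with
  | zero => simp
    
  | tmul b w => rw [muE_right, muE_right, ract_smul, smulMap_smul]
  | add y z hy hz => rw [tmul_add, tmul_add, map_add, map_add, hy, hz, smul_add]

lemma muE_balanced (hχ : IsTwisting χ) (b : A) (x z : A ⊗[k] V) :
    muE χ F (x ⊗ₜ[k] (b • z)) = muE χ F (ract χ b x ⊗ₜ[k] z) := by
  induction z using TensorProduct.induction_on with
  | zero => rw [smul_zero, tmul_zero, tmul_zero]
  | tmul c u =>
      rw [smul_tmul', smul_eq_mul, muE_right, muE_right, ract_mul χ hχ]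
  | add z z' hz hz' => rw [smul_add, tmul_add, tmul_add, map_add, map_add, hz, hz']

lemma muE_chi_one (hχ : IsTwisting χ) (hF : ∀ x : V ⊗[k] V, F x ∈ AxV χ)
    (htm : TwistedModuleCond χ F) (w : V) (z : A ⊗[k] V) :
    muE χ F (z ⊗ₜ[k] χ (w ⊗ₜ[k] (1 : A))) =
      smulMap (F ∘ₗ (TensorProduct.mk k V V).flip w) z := by
  induction z using TensorProduct.induction_on with
  | zero => rw [zero_tmul, map_zero, map_zero]
  | tmul c u =>
      have h1 : (c ⊗ₜ[k] u : A ⊗[k] V) = c • ((1 : A) ⊗ₜ[k] u) := by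
        rw [smul_tmul', smul_eq_mul, mul_one]
      rw [h1, muE_smul_left, ← htm u w 1, smulMap_smul, smulMap_tmul, one_smul]
      show c • nabla χ (F (u ⊗ₜ[k] w)) = _
      rw [nabla_F χ F hχ hF]
      rfl
  | add z z' hz hz' => rw [add_tmul, map_add, map_add, hz, hz']

lemma muE_nabla_right (hχ : IsTwisting χ) (hF : ∀ x : V ⊗[k] V, F x ∈ AxV χ)
    (htm : TwistedModuleCond χ F) (x y : A ⊗[k] V) :
    muE χ F (x ⊗ₜ[k] nabla χ y) = muE χ F (x ⊗ₜ[k] y) := by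
  induction y using TensorProduct.induction_on with
  | zero => rw [map_zero]
  | tmul b w =>
      rw [nabla_tmul, muE_balanced χ F hχ, muE_chi_one χ F hχ hF htm, muE_right]
  | add y y' hy hy' => rw [map_add, tmul_add, tmul_add, map_add, map_add, hy, hy']

lemma muE_nabla_left (hχ : IsTwisting χ) (x y : A ⊗[k] V) :
    muE χ F (nabla χ x ⊗ₜ[k] y) = muE χ F (x ⊗ₜ[k] y) := by
  induction y using TensorProduct.induction_on with
  | zero => rw [tmul_zero, tmul_zero]
  | tmul b w => rw [muE_right, muE_right, ract_nabla χ hχ]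
  | add y y' hy hy' => rw [tmul_add, tmul_add, map_add, map_add, hy, hy']

lemma nabla_muE (hχ : IsTwisting χ) (hF : ∀ x : V ⊗[k] V, F x ∈ AxV χ)
    (x y : A ⊗[k] V) :
    nabla χ (muE χ F (x ⊗ₜ[k] y)) = muE χ F (x ⊗ₜ[k] y) := by
  induction y using TensorProduct.induction_on with
  | zero => rw [tmul_zero, map_zero, map_zero]
  | tmul b w =>
      rw [muE_right]
      generalize ract χ b x = z
      induction z using TensorProduct.induction_on with
      | zero => rw [map_zero, map_zero]
      | tmul c u =>
          rw [smulMap_tmul, nabla_smul]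
          show c • nabla χ (F (u ⊗ₜ[k] w)) = _
          rw [nabla_F χ F hχ hF]
          rfl
      | add z z' hz hz' => rw [map_add, map_add, hz, hz']
  | add y y' hy hy' => rw [tmul_add, map_add, map_add, hy, hy']

end Aux

theorem statement_7 (χ : V ⊗[k] A →ₗ[k] A ⊗[k] V) (F : V ⊗[k] V →ₗ[k] A ⊗[k] V)
    (ν : A ⊗[k] V)
    (hχ : IsTwisting χ) (hF : ∀ x : V ⊗[k] V, F x ∈ AxV χ)
    (hν1 : Preunit1 χ F ν) (hν2 : Preunit2 χ F ν) (hν3 : Preunit3 χ ν)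
    (htm : TwistedModuleCond χ F) (hcoc : CocycleCond χ F) :
    (∀ x y : A ⊗[k] V, nabla χ (muE χ F (x ⊗ₜ[k] y)) = muE χ F (nabla χ x ⊗ₜ[k] nabla χ y)) ∧
    (∀ x y : A ⊗[k] V, x ∈ AxV χ → y ∈ AxV χ → muE χ F (x ⊗ₜ[k] y) ∈ AxV χ) := by
  refine ⟨fun x y => ?_, fun x y _ _ => ⟨muE χ F (x ⊗ₜ[k] y), nabla_muE χ F hχ hF x y⟩⟩
  rw [nabla_muE χ F hχ hF, ← muE_nabla_right χ F hχ hF htm x y,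
    ← muE_nabla_left χ F hχ x (nabla χ y)]

end WeakCrossedProduct
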